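/- Let p̂ : {0,1}^4 → ℝ be the joint distribution of (X, Z, Y, S) induced by some reduced SCM, and suppose p̂(X = x, Z = z) > 0 and p̂(S = s, X = x) > 0 for all x, z, s ∈ {0,1}, and p̂(X = 1, Y = 1) > 0. Let γ = p̂(S = 1). Then the set of values of PN = P(Y_{X=0} = 0, X = 1, Y = 1)/P(X = 1, Y = 1) attained by reduced SCMs whose induced joint distribution of (X, Z, Y, S) equals p̂ is exactly the set of values of (q1_5·h1 + q1_6·h2)/p̂(X = 1, Y = 1) as (q1, q2) ranges over the feasible region: q1 ∈ ℝ^8 and q2 ∈ ℝ^16 nonnegative, each summing to 1, satisfying for all x, y, z ∈ {0,1} the constraint Σ_{j with fX(j) = x and fY(z, j) = y} q1_j = p̂(Y = y | X = x, Z = z) · p̂(X = x), and for all s, x, z ∈ {0,1} the constraint Σ_{k with fZ(s, x, k) = z} q2_k = p̂(Z = z | S = s, X = x), where h1 = (1−γ)(q2_4 + q2_5 + q2_6 + q2_7) + γ(q2_1 + q2_5 + q2_9 + q2_13) and h2 = (1−γ)(q2_8 + q2_9 + q2_10 + q2_11) + γ(q2_2 + q2_6 + q2_10 + q2_14). -/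

import Mathlib

open Finset

attribute [local instance] Classical.propDecidable

/-- A reduced SCM as in the paper (with its exogenous types bundled):
exogenous `U1`, `U2`, a parameter `γ` for the binary pre-treatment variable
`S`, and mechanisms `fX`, `fZ`, `fY`. -/
structure ReducedSCM where
  U1 : Type
  U2 : Type
  [fin1 : Fintype U1]
  [fin2 : Fintype U2]
  p1 : U1 → ℝ
  p2 : U2 → ℝ
  gamma : ℝ
  p1_nonneg : ∀ u, 0 ≤ p1 u
  p2_nonneg : ∀ u, 0 ≤ p2 u
  p1_sum : ∑ u, p1 u = 1
  p2_sum : ∑ u, p2 u = 1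
  gamma_nonneg : 0 ≤ gamma
  gamma_le_one : gamma ≤ 1
  fX : U1 → Bool
  fZ : Bool → Bool → U2 → Bool
  fY : Bool → U1 → Bool

attribute [instance] ReducedSCM.fin1 ReducedSCM.fin2

namespace ReducedSCM

/-- Probability of a unit `(u1, u2, s)`. -/
def w (M : ReducedSCM) (u : M.U1 × M.U2 × Bool) : ℝ :=
  M.p1 u.1 * M.p2 u.2.1 * (if u.2.2 then M.gamma else 1 - M.gamma)

/-- Probability of an event. -/
noncomputable def P (M : ReducedSCM) (E : M.U1 × M.U2 × Bool → Prop) : ℝ :=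
  ∑ u, if E u then M.w u else 0

def S (M : ReducedSCM) (u : M.U1 × M.U2 × Bool) : Bool := u.2.2

def X (M : ReducedSCM) (u : M.U1 × M.U2 × Bool) : Bool := M.fX u.1

def Z (M : ReducedSCM) (u : M.U1 × M.U2 × Bool) : Bool := M.fZ (M.S u) (M.X u) u.2.1

def Y (M : ReducedSCM) (u : M.U1 × M.U2 × Bool) : Bool := M.fY (M.Z u) u.1

/-- Potential outcome `Y_{X=x}`. -/
def Yx (M : ReducedSCM) (x : Bool) (u : M.U1 × M.U2 × Bool) : Bool :=
  M.fY (M.fZ (M.S u) x u.2.1) u.1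

/-- Probability of necessity `PN = P(Y_{X=0} = 0, X = 1, Y = 1) / P(X = 1, Y = 1)`. -/
noncomputable def PN (M : ReducedSCM) : ℝ :=
  M.P (fun u => M.Yx false u = false ∧ M.X u = true ∧ M.Y u = true)
    / M.P (fun u => M.X u = true ∧ M.Y u = true)

/-- Probability of necessity and sufficiency `PNS = P(Y_{X=1} = 1, Y_{X=0} = 0)`. -/
noncomputable def PNS (M : ReducedSCM) : ℝ :=
  M.P (fun u => M.Yx true u = true ∧ M.Yx false u = false)

end ReducedSCM

/-- Canonical mechanism for `X`: `fX(j) = 1` iff `j ≥ 4`. -/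
def fXc (j : Fin 8) : Bool := decide (4 ≤ (j : ℕ))

/-- Canonical mechanism for `Y`: by the value of `j mod 4`, `Y` is `0`, `z`,
`1 - z`, or `1`. -/
def fYc (z : Bool) (j : Fin 8) : Bool :=
  if (j : ℕ) % 4 = 0 then false
  else if (j : ℕ) % 4 = 1 then z
  else if (j : ℕ) % 4 = 2 then !z
  else true

/-- Canonical mechanism for `Z`: writing `k = 8·b0 + 4·b1 + 2·b2 + b3`,
`fZ(s, x, k) = b_{2s+x}`. -/
def fZc (s x : Bool) (k : Fin 16) : Bool :=
  Nat.testBit (k : ℕ) (3 - (2 * s.toNat + x.toNat))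

/-- `h1 = (1−γ)(q2_4 + q2_5 + q2_6 + q2_7) + γ(q2_1 + q2_5 + q2_9 + q2_13)`. -/
def h1 (q2 : Fin 16 → ℝ) (γ : ℝ) : ℝ :=
  (1 - γ) * (q2 4 + q2 5 + q2 6 + q2 7) + γ * (q2 1 + q2 5 + q2 9 + q2 13)

/-- `h2 = (1−γ)(q2_8 + q2_9 + q2_10 + q2_11) + γ(q2_2 + q2_6 + q2_10 + q2_14)`. -/
def h2 (q2 : Fin 16 → ℝ) (γ : ℝ) : ℝ :=
  (1 - γ) * (q2 8 + q2 9 + q2 10 + q2 11) + γ * (q2 2 + q2 6 + q2 10 + q2 14)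

/-- Probability that a distribution `p̂` on `(x, z, y, s) ∈ {0,1}^4` assigns to
an event. -/
noncomputable def phatP (phat : Bool × Bool × Bool × Bool → ℝ)
    (E : Bool × Bool × Bool × Bool → Prop) : ℝ :=
  ∑ v, if E v then phat v else 0

/-- Conditional probability `p̂(A | B)`. -/
noncomputable def phatCond (phat : Bool × Bool × Bool × Bool → ℝ)
    (A B : Bool × Bool × Bool × Bool → Prop) : ℝ :=
  phatP phat (fun v => A v ∧ B v) / phatP phat B

/-- A reduced SCM induces `p̂` as the joint distribution of `(X, Z, Y, S)`. -/
def ReducedSCM.induces (M : ReducedSCM)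
    (phat : Bool × Bool × Bool × Bool → ℝ) : Prop :=
  ∀ x z y s : Bool,
    M.P (fun u => M.X u = x ∧ M.Z u = z ∧ M.Y u = y ∧ M.S u = s)
      = phat (x, z, y, s)

/-- The feasible region of the multilinear program: `q1 ∈ ℝ^8` and `q2 ∈ ℝ^16`
nonnegative, each summing to `1`, satisfying the linear constraints
`Σ_{j : fX(j) = x, fY(z, j) = y} q1_j = p̂(Y = y | X = x, Z = z) · p̂(X = x)` and
`Σ_{k : fZ(s, x, k) = z} q2_k = p̂(Z = z | S = s, X = x)`. -/
def feasible (phat : Bool × Bool × Bool × Bool → ℝ)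
    (q1 : Fin 8 → ℝ) (q2 : Fin 16 → ℝ) : Prop :=
  (∀ j, 0 ≤ q1 j) ∧ (∑ j, q1 j = 1) ∧ (∀ k, 0 ≤ q2 k) ∧ (∑ k, q2 k = 1) ∧
  (∀ x y z : Bool,
    (∑ j : Fin 8, if fXc j = x ∧ fYc z j = y then q1 j else 0)
      = phatCond phat (fun v => v.2.2.1 = y) (fun v => v.1 = x ∧ v.2.1 = z)
        * phatP phat (fun v => v.1 = x)) ∧
  (∀ s x z : Bool,
    (∑ k : Fin 16, if fZc s x k = z then q2 k else 0)
      = phatCond phat (fun v => v.2.1 = z) (fun v => v.2.2.2 = s ∧ v.1 = x))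

/-!
Group the exogenous values by response type: `u1` by the triple `(fX u1, fY 0 u1, fY 1 u1)`,
coded in `Fin 8` so that the canonical mechanisms `fXc`, `fYc` reproduce it, and `u2` by the
four values `fZ s x u2`, coded in `Fin 16` for `fZc`. Pushing `p1`, `p2` forward gives `q1`, `q2`.

Since `u1`, `u2`, `S` are independent, `P(X = x, Z = z, Y = y, S = s)` factors as
`P(S = s) · P₁(fX = x, fY z = y) · P₂(fZ s x = z)`. Under the positivity hypotheses the two
mechanism factors are identified by the conditional probabilities of `p̂` appearing in the
constraints, so `(q1, q2)` is feasible; conversely, a feasible point defines a canonical SCM with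
the same three factors as any SCM inducing `p̂`, hence inducing `p̂` itself.

In the numerator of PN, `X = 1` makes `Y = Y_{X=1}`, so `Y_{X=1} = 1`, `Y_{X=0} = 0` forces
`Z_{X=1} ≠ Z_{X=0}`: either `Y` copies `Z` (type 5) and `Z` complies with `X`, or `Y` negates `Z`
(type 6) and `Z` defies `X`. Averaging the `Z`-part over `S` gives `h1` and `h2`.
-/

theorem Fintype.sum_ite_comp_eq_sum_fiber {α β : Type*} [Fintype α] [Fintype β]
    (t : α → β) (p : α → ℝ) (Q : β → Prop) [DecidablePred Q] :
    ∑ b, (if Q b then ∑ a, (if t a = b then p a else 0) else 0)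
      = ∑ a, if Q (t a) then p a else 0 := by
  rw [← Finset.sum_fiberwise Finset.univ t]
  refine Finset.sum_congr rfl fun b _ => ?_
  rw [Finset.sum_filter, ite_sum_zero]
  refine Finset.sum_congr rfl fun a _ => ?_
  by_cases h : t a = b <;> simp [h]

namespace ReducedSCM

variable (M : ReducedSCM)

noncomputable def P1 (a : M.U1 → Prop) : ℝ := ∑ u, if a u then M.p1 u else 0

noncomputable def P2 (b : M.U2 → Prop) : ℝ := ∑ u, if b u then M.p2 u else 0

noncomputable def probS (s : Bool) : ℝ := if s then M.gamma else 1 - M.gamma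

noncomputable def P2S (b : M.U2 × Bool → Prop) : ℝ :=
  ∑ v, if b v then M.p2 v.1 * M.probS v.2 else 0

theorem P_congr {E F : M.U1 × M.U2 × Bool → Prop} (h : ∀ u, E u ↔ F u) : M.P E = M.P F := by
  rw [funext fun u => propext (h u)]

theorem P_eq_sum_fiber {β : Type*} [Fintype β] (f : M.U1 × M.U2 × Bool → β)
    (E : M.U1 × M.U2 × Bool → Prop) : M.P E = ∑ b, M.P (fun u => E u ∧ f u = b) := by
  unfold P
  rw [Finset.sum_comm]
  refine Finset.sum_congr rfl fun u _ => ?_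
  by_cases h : E u <;> simp [h]

theorem P_and_eq_mul (a : M.U1 → Prop) (b : M.U2 × Bool → Prop) :
    M.P (fun u => a u.1 ∧ b u.2) = M.P1 a * M.P2S b := by
  simp only [P, P1, P2S, w, probS, Fintype.sum_prod_type, Finset.sum_mul_sum]
  refine Finset.sum_congr rfl fun u1 _ => Finset.sum_congr rfl fun u2 _ => ?_
  by_cases ha : a u1
  · simp [ha, mul_add, mul_ite, mul_assoc]
  · simp [ha]

theorem P2S_eq_sum (b : M.U2 × Bool → Prop) :
    M.P2S b = ∑ s, M.P2 (fun u => b (u, s)) * M.probS s := by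
  simp only [P2S, P2, Fintype.sum_prod_type, Finset.sum_mul, ite_mul, zero_mul]
  exact Finset.sum_comm

@[simp] theorem P1_true : M.P1 (fun _ => True) = 1 := by simp [P1, M.p1_sum]
@[simp] theorem P2_true : M.P2 (fun _ => True) = 1 := by simp [P2, M.p2_sum]
@[simp] theorem P1_false : M.P1 (fun _ => False) = 0 := by simp [P1]
@[simp] theorem P2_false : M.P2 (fun _ => False) = 0 := by simp [P2]

theorem P2S_and_eq_mul (b : M.U2 → Prop) (s : Bool) :
    M.P2S (fun v => b v.1 ∧ v.2 = s) = M.P2 b * M.probS s := by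
  rw [P2S_eq_sum]; cases s <;> simp

theorem P2S_true : M.P2S (fun _ => True) = 1 := by simp [P2S_eq_sum, probS]

theorem P1_nonneg (a : M.U1 → Prop) : 0 ≤ M.P1 a :=
  Finset.sum_nonneg fun u _ => by split_ifs <;> simp [M.p1_nonneg u]

theorem P2_nonneg (b : M.U2 → Prop) : 0 ≤ M.P2 b :=
  Finset.sum_nonneg fun u _ => by split_ifs <;> simp [M.p2_nonneg u]

def responseType1 (u : M.U1) : Fin 8 :=
  Fin.ofNat 8 (4 * (M.fX u).toNat + 2 * (M.fY false u).toNat + (M.fY true u).toNat)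

def responseType2 (u : M.U2) : Fin 16 :=
  Fin.ofNat 16 (8 * (M.fZ false false u).toNat + 4 * (M.fZ false true u).toNat
    + 2 * (M.fZ true false u).toNat + (M.fZ true true u).toNat)

@[simp] theorem fXc_responseType1 (u : M.U1) : fXc (M.responseType1 u) = M.fX u := by
  unfold responseType1
  generalize M.fX u = a, M.fY false u = b, M.fY true u = c
  revert a b c; decide

@[simp] theorem fYc_responseType1 (z : Bool) (u : M.U1) :
    fYc z (M.responseType1 u) = M.fY z u := by
  unfold responseType1
  cases z <;> generalize M.fX u = a, M.fY false u = b, M.fY true u = c <;> revert a b c <;> decide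

@[simp] theorem fZc_responseType2 (s x : Bool) (u : M.U2) :
    fZc s x (M.responseType2 u) = M.fZ s x u := by
  unfold responseType2
  cases s <;> cases x <;>
    generalize M.fZ false false u = b0, M.fZ false true u = b1, M.fZ true false u = b2,
      M.fZ true true u = b3 <;> revert b0 b1 b2 b3 <;> decide

noncomputable def responseProb1 (j : Fin 8) : ℝ := M.P1 (fun u => M.responseType1 u = j)

noncomputable def responseProb2 (k : Fin 16) : ℝ := M.P2 (fun u => M.responseType2 u = k)

theorem sum_ite_responseProb1 (Q : Fin 8 → Prop) [DecidablePred Q] :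
    ∑ j, (if Q j then M.responseProb1 j else 0) = M.P1 (fun u => Q (M.responseType1 u)) := by
  unfold responseProb1 P1
  convert Fintype.sum_ite_comp_eq_sum_fiber M.responseType1 M.p1 Q

theorem sum_ite_responseProb2 (Q : Fin 16 → Prop) [DecidablePred Q] :
    ∑ k, (if Q k then M.responseProb2 k else 0) = M.P2 (fun u => Q (M.responseType2 u)) := by
  unfold responseProb2 P2
  convert Fintype.sum_ite_comp_eq_sum_fiber M.responseType2 M.p2 Q

theorem responseProb1_nonneg (j : Fin 8) : 0 ≤ M.responseProb1 j := M.P1_nonneg _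

theorem responseProb2_nonneg (k : Fin 16) : 0 ≤ M.responseProb2 k := M.P2_nonneg _

theorem sum_responseProb1 : ∑ j, M.responseProb1 j = 1 := by
  simpa using M.sum_ite_responseProb1 (fun _ => True)

theorem sum_responseProb2 : ∑ k, M.responseProb2 k = 1 := by
  simpa using M.sum_ite_responseProb2 (fun _ => True)

theorem sum_ite_fXc_fYc_responseProb1 (x z y : Bool) :
    ∑ j, (if fXc j = x ∧ fYc z j = y then M.responseProb1 j else 0)
      = M.P1 (fun u => M.fX u = x ∧ M.fY z u = y) := by
  simp [sum_ite_responseProb1]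

theorem sum_ite_fZc_responseProb2 (s x z : Bool) :
    ∑ k, (if fZc s x k = z then M.responseProb2 k else 0) = M.P2 (fun u => M.fZ s x u = z) := by
  simp [sum_ite_responseProb2]

theorem P_XZYS_eq_mul (x z y s : Bool) :
    M.P (fun u => M.X u = x ∧ M.Z u = z ∧ M.Y u = y ∧ M.S u = s)
      = M.P1 (fun u => M.fX u = x ∧ M.fY z u = y)
        * (M.P2 (fun u => M.fZ s x u = z) * M.probS s) := by
  rw [← P2S_and_eq_mul, ← P_and_eq_mul]
  exact M.P_congr fun u => by grind [X, Y, Z, S]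

theorem responseProb1_five : M.responseProb1 5
    = M.P1 (fun u => M.fX u = true ∧ M.fY true u = true ∧ M.fY false u = false) := by
  have hfilter : univ.filter (fun j =>
      fXc j = true ∧ fYc true j = true ∧ fYc false j = false) = {5} := by decide
  rw [← Finset.sum_singleton M.responseProb1 5, ← hfilter, Finset.sum_filter,
    sum_ite_responseProb1]
  simp only [fXc_responseType1, fYc_responseType1]

theorem responseProb1_six : M.responseProb1 6
    = M.P1 (fun u => M.fX u = true ∧ M.fY false u = true ∧ M.fY true u = false) := by
  have hfilter : univ.filter (fun j =>
      fXc j = true ∧ fYc false j = true ∧ fYc true j = false) = {6} := by decide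
  rw [← Finset.sum_singleton M.responseProb1 6, ← hfilter, Finset.sum_filter,
    sum_ite_responseProb1]
  simp only [fXc_responseType1, fYc_responseType1]

theorem P2_eq_sum_ite_responseProb2 (s z1 z0 : Bool) :
    M.P2 (fun u => M.fZ s true u = z1 ∧ M.fZ s false u = z0)
      = ∑ k, if fZc s true k = z1 ∧ fZc s false k = z0 then M.responseProb2 k else 0 := by
  simp [sum_ite_responseProb2]

theorem P2S_complier_eq_h1 :
    M.P2S (fun v => M.fZ v.2 true v.1 = true ∧ M.fZ v.2 false v.1 = false)
      = h1 M.responseProb2 M.gamma := by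
  have hfilter0 : univ.filter (fun k =>
      fZc false true k = true ∧ fZc false false k = false) = {4, 5, 6, 7} := by decide
  have hfilter1 : univ.filter (fun k =>
      fZc true true k = true ∧ fZc true false k = false) = {1, 5, 9, 13} := by decide
  rw [P2S_eq_sum, Fintype.sum_bool, P2_eq_sum_ite_responseProb2, P2_eq_sum_ite_responseProb2,
    ← Finset.sum_filter, ← Finset.sum_filter, hfilter0, hfilter1]
  simp only [mem_insert, Fin.reduceEq, mem_singleton, or_self, not_false_eq_true, sum_insert,
    sum_singleton, probS, ↓reduceIte, Bool.false_eq_true, h1]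
  ring

theorem P2S_defier_eq_h2 :
    M.P2S (fun v => M.fZ v.2 true v.1 = false ∧ M.fZ v.2 false v.1 = true)
      = h2 M.responseProb2 M.gamma := by
  have hfilter0 : univ.filter (fun k =>
      fZc false true k = false ∧ fZc false false k = true) = {8, 9, 10, 11} := by decide
  have hfilter1 : univ.filter (fun k =>
      fZc true true k = false ∧ fZc true false k = true) = {2, 6, 10, 14} := by decide
  rw [P2S_eq_sum, Fintype.sum_bool, P2_eq_sum_ite_responseProb2, P2_eq_sum_ite_responseProb2,
    ← Finset.sum_filter, ← Finset.sum_filter, hfilter0, hfilter1]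
  simp only [mem_insert, Fin.reduceEq, mem_singleton, or_self, not_false_eq_true, sum_insert,
    sum_singleton, probS, ↓reduceIte, Bool.false_eq_true, h2]
  ring

theorem PN_numerator_eq :
    M.P (fun u => M.Yx false u = false ∧ M.X u = true ∧ M.Y u = true)
      = M.responseProb1 5 * h1 M.responseProb2 M.gamma
        + M.responseProb1 6 * h2 M.responseProb2 M.gamma := by
  have hfiber : ∀ z1 z0 : Bool,
      M.P (fun u => (M.Yx false u = false ∧ M.X u = true ∧ M.Y u = true) ∧
          (M.fZ u.2.2 true u.2.1, M.fZ u.2.2 false u.2.1) = (z1, z0))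
        = M.P1 (fun u => M.fX u = true ∧ M.fY z1 u = true ∧ M.fY z0 u = false)
          * M.P2S (fun v => M.fZ v.2 true v.1 = z1 ∧ M.fZ v.2 false v.1 = z0) := by
    intro z1 z0
    rw [← P_and_eq_mul]
    exact M.P_congr fun u => by grind [Yx, X, Y, Z, S]
  rw [M.P_eq_sum_fiber (fun u => (M.fZ u.2.2 true u.2.1, M.fZ u.2.2 false u.2.1))]
  simp only [Fintype.sum_prod_type, Fintype.sum_bool, hfiber, Bool.eq_true_and_eq_false_self,
    and_false, P1_false, zero_mul, zero_add, add_zero]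
  rw [responseProb1_five, responseProb1_six, P2S_complier_eq_h1, P2S_defier_eq_h2]

variable {M} {phat : Bool × Bool × Bool × Bool → ℝ}

theorem phatP_eq_P (hM : M.induces phat) (E : Bool × Bool × Bool × Bool → Prop) :
    phatP phat E = M.P (fun u => E (M.X u, M.Z u, M.Y u, M.S u)) := by
  rw [M.P_eq_sum_fiber (fun u => (M.X u, M.Z u, M.Y u, M.S u))]
  refine Finset.sum_congr rfl fun ⟨x, z, y, s⟩ _ => ?_
  by_cases hE : E (x, z, y, s)
  · rw [if_pos hE, ← hM x z y s]
    exact M.P_congr fun u => by grind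
  · rw [if_neg hE]
    refine (Finset.sum_eq_zero fun u _ => if_neg ?_).symm
    rintro ⟨h, heq⟩
    exact hE (heq ▸ h)

theorem phatP_eq_mul_of_iff (hM : M.induces phat) {E : Bool × Bool × Bool × Bool → Prop}
    {a : M.U1 → Prop} {b : M.U2 × Bool → Prop}
    (h : ∀ u, E (M.X u, M.Z u, M.Y u, M.S u) ↔ a u.1 ∧ b u.2) :
    phatP phat E = M.P1 a * M.P2S b := by
  rw [phatP_eq_P hM, ← P_and_eq_mul]
  exact M.P_congr h

theorem gamma_eq_phatP (hM : M.induces phat) : M.gamma = phatP phat (fun v => v.2.2.2 = true) := by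
  rw [phatP_eq_mul_of_iff hM (a := fun _ => True) (b := fun v => True ∧ v.2 = true) (by simp [S]),
    M.P2S_and_eq_mul (fun _ => True)]
  simp [probS]

theorem phatCond_mul_phatP_eq_P1 (hM : M.induces phat) {x z : Bool}
    (hpos : 0 < phatP phat (fun v => v.1 = x ∧ v.2.1 = z)) (y : Bool) :
    phatCond phat (fun v => v.2.2.1 = y) (fun v => v.1 = x ∧ v.2.1 = z)
        * phatP phat (fun v => v.1 = x)
      = M.P1 (fun u => M.fX u = x ∧ M.fY z u = y) := by
  set K := M.P2S (fun v => M.fZ v.2 x v.1 = z)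
  have hYXZ : phatP phat (fun v => v.2.2.1 = y ∧ v.1 = x ∧ v.2.1 = z)
      = M.P1 (fun u => M.fX u = x ∧ M.fY z u = y) * K :=
    phatP_eq_mul_of_iff hM fun u => by grind [X, Y, Z, S]
  have hXZ : phatP phat (fun v => v.1 = x ∧ v.2.1 = z) = M.P1 (fun u => M.fX u = x) * K :=
    phatP_eq_mul_of_iff hM fun u => by grind [X, Z, S]
  have hX : phatP phat (fun v => v.1 = x) = M.P1 (fun u => M.fX u = x) := by
    rw [phatP_eq_mul_of_iff hM (a := fun u => M.fX u = x) (b := fun _ => True) (by simp [X]),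
      P2S_true, mul_one]
  obtain ⟨hX0, hK0⟩ := mul_ne_zero_iff.mp (hXZ ▸ hpos.ne')
  rw [phatCond, hYXZ, hXZ, hX, mul_div_mul_right _ _ hK0, div_mul_cancel₀ _ hX0]

theorem phatCond_eq_P2 (hM : M.induces phat) {s x : Bool}
    (hpos : 0 < phatP phat (fun v => v.2.2.2 = s ∧ v.1 = x)) (z : Bool) :
    phatCond phat (fun v => v.2.1 = z) (fun v => v.2.2.2 = s ∧ v.1 = x)
      = M.P2 (fun u => M.fZ s x u = z) := by
  have hZSX : phatP phat (fun v => v.2.1 = z ∧ v.2.2.2 = s ∧ v.1 = x)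
      = M.P1 (fun u => M.fX u = x) * (M.P2 (fun u => M.fZ s x u = z) * M.probS s) := by
    rw [← P2S_and_eq_mul]
    exact phatP_eq_mul_of_iff hM fun u => by grind [X, Z, S]
  have hSX : phatP phat (fun v => v.2.2.2 = s ∧ v.1 = x)
      = M.P1 (fun u => M.fX u = x) * M.probS s := by
    rw [phatP_eq_mul_of_iff hM (a := fun u => M.fX u = x) (b := fun v => True ∧ v.2 = s)
      (by simp [X, S, and_comm]), M.P2S_and_eq_mul (fun _ => True), P2_true, one_mul]
  obtain ⟨hX0, hS0⟩ := mul_ne_zero_iff.mp (hSX ▸ hpos.ne')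
  rw [phatCond, hZSX, hSX]
  field_simp

theorem PN_eq_of_induces (hM : M.induces phat) :
    M.PN = (M.responseProb1 5 * h1 M.responseProb2 (phatP phat (fun v => v.2.2.2 = true))
        + M.responseProb1 6 * h2 M.responseProb2 (phatP phat (fun v => v.2.2.2 = true)))
      / phatP phat (fun v => v.1 = true ∧ v.2.2.1 = true) := by
  rw [PN, PN_numerator_eq, ← gamma_eq_phatP hM, phatP_eq_P hM]

theorem feasible_responseProb (hM : M.induces phat)
    (hposXZ : ∀ x z : Bool, 0 < phatP phat (fun v => v.1 = x ∧ v.2.1 = z))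
    (hposSX : ∀ s x : Bool, 0 < phatP phat (fun v => v.2.2.2 = s ∧ v.1 = x)) :
    feasible phat M.responseProb1 M.responseProb2 :=
  ⟨M.responseProb1_nonneg, M.sum_responseProb1, M.responseProb2_nonneg, M.sum_responseProb2,
    fun x y z => by
      rw [sum_ite_fXc_fYc_responseProb1, phatCond_mul_phatP_eq_P1 hM (hposXZ x z)],
    fun s x z => by rw [sum_ite_fZc_responseProb2, phatCond_eq_P2 hM (hposSX s x)]⟩

end ReducedSCM

def canonicalSCM (q1 : stdSimplex ℝ (Fin 8)) (q2 : stdSimplex ℝ (Fin 16))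
    (γ : Set.Icc (0 : ℝ) 1) : ReducedSCM where
  U1 := Fin 8
  U2 := Fin 16
  p1 := q1
  p2 := q2
  gamma := γ
  p1_nonneg := q1.2.1
  p2_nonneg := q2.2.1
  p1_sum := q1.2.2
  p2_sum := q2.2.2
  gamma_nonneg := γ.2.1
  gamma_le_one := γ.2.2
  fX := fXc
  fZ := fZc
  fY := fYc

namespace canonicalSCM

variable (q1 : stdSimplex ℝ (Fin 8)) (q2 : stdSimplex ℝ (Fin 16)) (γ : Set.Icc (0 : ℝ) 1)

@[simp] theorem gamma_eq : (canonicalSCM q1 q2 γ).gamma = γ := rfl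

theorem responseType1_eq (j : (canonicalSCM q1 q2 γ).U1) :
    (canonicalSCM q1 q2 γ).responseType1 j = j := by
  fin_cases j <;> rfl

theorem responseType2_eq (k : (canonicalSCM q1 q2 γ).U2) :
    (canonicalSCM q1 q2 γ).responseType2 k = k := by
  fin_cases k <;> rfl

theorem responseProb1_eq : (canonicalSCM q1 q2 γ).responseProb1 = q1 := by
  funext j
  simp only [ReducedSCM.responseProb1, ReducedSCM.P1, responseType1_eq]
  exact (Fintype.sum_eq_single j fun k hk => if_neg hk).trans (if_pos rfl)

theorem responseProb2_eq : (canonicalSCM q1 q2 γ).responseProb2 = q2 := by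
  funext k
  simp only [ReducedSCM.responseProb2, ReducedSCM.P2, responseType2_eq]
  exact (Fintype.sum_eq_single k fun l hl => if_neg hl).trans (if_pos rfl)

theorem induces {M0 : ReducedSCM} {phat : Bool × Bool × Bool × Bool → ℝ}
    (hM0 : M0.induces phat)
    (hposXZ : ∀ x z : Bool, 0 < phatP phat (fun v => v.1 = x ∧ v.2.1 = z))
    (hposSX : ∀ s x : Bool, 0 < phatP phat (fun v => v.2.2.2 = s ∧ v.1 = x))
    (hq : feasible phat q1 q2) (hγ : (γ : ℝ) = M0.gamma) :
    (canonicalSCM q1 q2 γ).induces phat := by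
  obtain ⟨-, -, -, -, hq1, hq2⟩ := hq
  intro x z y s
  have hP1 : (canonicalSCM q1 q2 γ).P1 (fun j => fXc j = x ∧ fYc z j = y)
      = M0.P1 (fun u => M0.fX u = x ∧ M0.fY z u = y) := by
    rw [← ReducedSCM.phatCond_mul_phatP_eq_P1 hM0 (hposXZ x z), ← hq1]
    exact Finset.sum_congr rfl fun j _ => by split_ifs <;> rfl
  have hP2 : (canonicalSCM q1 q2 γ).P2 (fun k => fZc s x k = z)
      = M0.P2 (fun u => M0.fZ s x u = z) := by
    rw [← ReducedSCM.phatCond_eq_P2 hM0 (hposSX s x), ← hq2]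
    exact Finset.sum_congr rfl fun k _ => by split_ifs <;> rfl
  have hS : (canonicalSCM q1 q2 γ).probS s = M0.probS s := by
    simp only [ReducedSCM.probS, gamma_eq, hγ]
  rw [ReducedSCM.P_XZYS_eq_mul, ← hM0 x z y s, ReducedSCM.P_XZYS_eq_mul]
  exact congr_arg₂ _ hP1 (congr_arg₂ _ hP2 hS)

end canonicalSCM

theorem PN_values_eq_bilinear_program_general
    (phat : Bool × Bool × Bool × Bool → ℝ)
    (hind : ∃ M0 : ReducedSCM, M0.induces phat)
    (hposXZ : ∀ x z : Bool, 0 < phatP phat (fun v => v.1 = x ∧ v.2.1 = z))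
    (hposSX : ∀ s x : Bool, 0 < phatP phat (fun v => v.2.2.2 = s ∧ v.1 = x)) :
    {r : ℝ | ∃ M : ReducedSCM, M.induces phat ∧ M.PN = r}
      = {r : ℝ | ∃ (q1 : Fin 8 → ℝ) (q2 : Fin 16 → ℝ), feasible phat q1 q2 ∧
          r = (q1 5 * h1 q2 (phatP phat (fun v => v.2.2.2 = true))
               + q1 6 * h2 q2 (phatP phat (fun v => v.2.2.2 = true)))
              / phatP phat (fun v => v.1 = true ∧ v.2.2.1 = true)} := by
  ext r
  constructor
  · rintro ⟨M, hM, rfl⟩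
    exact ⟨_, _, M.feasible_responseProb hM hposXZ hposSX, M.PN_eq_of_induces hM⟩
  · rintro ⟨q1, q2, hq, rfl⟩
    obtain ⟨M0, hM0⟩ := hind
    let Mc := canonicalSCM ⟨q1, hq.1, hq.2.1⟩ ⟨q2, hq.2.2.1, hq.2.2.2.1⟩
      ⟨M0.gamma, M0.gamma_nonneg, M0.gamma_le_one⟩
    have hMc : Mc.induces phat := canonicalSCM.induces _ _ _ hM0 hposXZ hposSX hq rfl
    refine ⟨Mc, hMc, ?_⟩
    rw [Mc.PN_eq_of_induces hMc, canonicalSCM.responseProb1_eq, canonicalSCM.responseProb2_eq]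
    rfl

/-- If `p̂` is the joint distribution of `(X, Z, Y, S)` of some
reduced SCM, with `p̂(X = x, Z = z) > 0`, `p̂(S = s, X = x) > 0` for all
`x, z, s`, `p̂(X = 1, Y = 1) > 0`, and `γ = p̂(S = 1)`, then the set of PN
values attained by reduced SCMs inducing `p̂` is exactly the set of values of
`(q1_5·h1 + q1_6·h2) / p̂(X = 1, Y = 1)` over the feasible region. -/
theorem PN_values_eq_bilinear_program
    (phat : Bool × Bool × Bool × Bool → ℝ)
    (hind : ∃ M0 : ReducedSCM, M0.induces phat)
    (hposXZ : ∀ x z : Bool, 0 < phatP phat (fun v => v.1 = x ∧ v.2.1 = z))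
    (hposSX : ∀ s x : Bool, 0 < phatP phat (fun v => v.2.2.2 = s ∧ v.1 = x))
    (hposXY : 0 < phatP phat (fun v => v.1 = true ∧ v.2.2.1 = true)) :
    {r : ℝ | ∃ M : ReducedSCM, M.induces phat ∧ M.PN = r}
      = {r : ℝ | ∃ (q1 : Fin 8 → ℝ) (q2 : Fin 16 → ℝ), feasible phat q1 q2 ∧
          r = (q1 5 * h1 q2 (phatP phat (fun v => v.2.2.2 = true))
               + q1 6 * h2 q2 (phatP phat (fun v => v.2.2.2 = true)))
              / phatP phat (fun v => v.1 = true ∧ v.2.2.1 = true)} :=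
  PN_values_eq_bilinear_program_general phat hind hposXZ hposSX
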